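/- For j = 1, …, m let T_j be triangles in ℝ³ (Euclidean space) with vertices x₁ⱼ, x₂ⱼ, x₃ⱼ, affine parameterizations x_j(s,t) = (1−s−t)·x₁ⱼ + s·x₂ⱼ + t·x₃ⱼ over the reference triangle e₀ = {(s,t) : 0 ≤ s, 0 ≤ t, s + t ≤ 1}, centroids c_j = (x₁ⱼ + x₂ⱼ + x₃ⱼ)/3, and |Δ_j| = ‖(x₂ⱼ − x₁ⱼ) × (x₃ⱼ − x₁ⱼ)‖. Let f : ℝ³ → ℝ be twice continuously differentiable on an open set containing ⋃_j T_j, let K ≥ 0 satisfy |f''(y)(v,v)| ≤ K‖v‖² for all y ∈ ⋃_j T_j and v ∈ ℝ³, let h ≥ diameter of every T_j, and let |Γ_p| = Σ_{j=1}^m |Δ_j|/2 be the total area. Then | Σ_{j=1}^m |Δ_j|·∫_{e₀} f(x_j(s,t)) d(s,t) − Σ_{j=1}^m (|Δ_j|/2)·f(c_j) | ≤ (K·h²/4)·|Γ_p|. -/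

import Mathlib

/-- The reference triangle `e₀`. -/
def refTriangle : Set (ℝ × ℝ) := {p | 0 ≤ p.1 ∧ 0 ≤ p.2 ∧ p.1 + p.2 ≤ 1}

noncomputable def cross3 (a b : EuclideanSpace ℝ (Fin 3)) : EuclideanSpace ℝ (Fin 3) :=
  (EuclideanSpace.equiv (Fin 3) ℝ).symm
    (crossProduct ((EuclideanSpace.equiv (Fin 3) ℝ) a) ((EuclideanSpace.equiv (Fin 3) ℝ) b))

/-!
On each triangle expand `f` to second order about the centroid `c`. The linear term integrates
to zero over `e₀` because `c` is the barycentre of the triangle: each barycentric coordinate has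
mean `1/6` over `e₀`, whose area is `1/2`. Every point of the triangle lies within `2h/3` of `c`
(the farthest points of a convex hull from `c` are vertices), so the Taylor remainder is at most
`K (2h/3)² / 2` pointwise, and its integral over `e₀` at most `K h² / 9 ≤ K h² / 8`. Summing with
the weights `|Δⱼ|` gives the bound.
-/

open MeasureTheory Set

theorem measurableSet_refTriangle : MeasurableSet refTriangle :=
  (measurableSet_le measurable_const measurable_fst).inter
    ((measurableSet_le measurable_const measurable_snd).inter
      (measurableSet_le (measurable_fst.add measurable_snd) measurable_const))

theorem isCompact_refTriangle : IsCompact refTriangle := by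
  refine (isCompact_Icc (a := ((0 : ℝ), (0 : ℝ))) (b := (1, 1))).of_isClosed_subset ?_ ?_
  · exact (isClosed_le continuous_const continuous_fst).inter
      ((isClosed_le continuous_const continuous_snd).inter
        (isClosed_le (continuous_fst.add continuous_snd) continuous_const))
  · rintro ⟨s, t⟩ ⟨hs, ht, hst⟩
    exact ⟨⟨hs, ht⟩, by constructor <;> dsimp at * <;> linarith⟩

theorem preimage_mk_refTriangle {s : ℝ} (hs : 0 ≤ s) :
    (fun t => (s, t)) ⁻¹' refTriangle = Icc 0 (1 - s) := by
  ext t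
  simp only [refTriangle, mem_preimage, mem_ofPred_eq, mem_Icc]
  constructor
  · rintro ⟨-, ht, hst⟩; exact ⟨ht, by linarith⟩
  · rintro ⟨ht, hst⟩; exact ⟨hs, ht, by linarith⟩

theorem setIntegral_refTriangle_eq_intervalIntegral {g : ℝ × ℝ → ℝ}
    (hg : IntegrableOn g refTriangle) :
    ∫ p in refTriangle, g p = ∫ s in (0 : ℝ)..1, ∫ t in (0 : ℝ)..(1 - s), g (s, t) := by
  have hslice : ∀ s, ∫ t, refTriangle.indicator g (s, t) =
      (Icc 0 1).indicator (fun s => ∫ t in (0 : ℝ)..(1 - s), g (s, t)) s := by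
    intro s
    rw [show (fun t => refTriangle.indicator g (s, t)) =
      ((fun t => (s, t)) ⁻¹' refTriangle).indicator (fun t => g (s, t)) from
        funext fun _ => (indicator_comp_right _).symm]
    rcases lt_or_ge s 0 with hs | hs
    · have : (fun t => (s, t)) ⁻¹' refTriangle = ∅ := by
        ext t; simp only [refTriangle, mem_preimage, mem_ofPred_eq, mem_empty_iff_false,
          iff_false, not_and]; intro h; linarith
      simp [this, indicator_of_notMem (show s ∉ Icc (0 : ℝ) 1 from fun h => by linarith [h.1])]
    rw [preimage_mk_refTriangle hs, integral_indicator measurableSet_Icc]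
    rcases le_or_gt s 1 with hs1 | hs1
    · rw [indicator_of_mem (show s ∈ Icc (0 : ℝ) 1 from ⟨hs, hs1⟩),
        intervalIntegral.integral_of_le (by linarith), integral_Icc_eq_integral_Ioc]
    · rw [indicator_of_notMem (fun h => by linarith [h.2]), Icc_eq_empty (by linarith)]
      simp
  rw [← integral_indicator measurableSet_refTriangle, Measure.volume_eq_prod,
    integral_prod _ ((integrable_indicator_iff measurableSet_refTriangle).2 hg)]
  simp only [hslice]
  rw [integral_indicator measurableSet_Icc, integral_Icc_eq_integral_Ioc,
    intervalIntegral.integral_of_le zero_le_one]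

theorem integrableOn_refTriangle {F : Type*} [NormedAddCommGroup F] {g : ℝ × ℝ → F}
    (hg : Continuous g) : IntegrableOn g refTriangle :=
  hg.continuousOn.integrableOn_compact isCompact_refTriangle

theorem measureReal_refTriangle : volume.real refTriangle = 1 / 2 := by
  have := setIntegral_refTriangle_eq_intervalIntegral (g := fun _ => (1 : ℝ))
    (integrableOn_refTriangle continuous_const)
  rw [setIntegral_const, smul_eq_mul, mul_one] at this
  rw [this]
  simp [intervalIntegral.integral_comp_sub_left (fun x : ℝ => x)]

theorem setIntegral_refTriangle_fst : ∫ p in refTriangle, p.1 = 1 / 6 := by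
  rw [setIntegral_refTriangle_eq_intervalIntegral (integrableOn_refTriangle continuous_fst)]
  simp only [intervalIntegral.integral_const, smul_eq_mul, sub_zero, sub_mul, one_mul]
  rw [intervalIntegral.integral_sub (by simp) (Continuous.intervalIntegrable (by fun_prop) _ _)]
  norm_num [← pow_two, integral_pow]

theorem setIntegral_refTriangle_snd : ∫ p in refTriangle, p.2 = 1 / 6 := by
  rw [setIntegral_refTriangle_eq_intervalIntegral (integrableOn_refTriangle continuous_snd)]
  simp only [integral_id, zero_pow two_ne_zero, sub_zero, intervalIntegral.integral_div]
  rw [intervalIntegral.integral_comp_sub_left (fun x : ℝ => x ^ 2)]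
  norm_num [integral_pow]

theorem setIntegral_refTriangle_one_sub : ∫ p in refTriangle, (1 - p.1 - p.2) = 1 / 6 := by
  rw [integral_sub (integrableOn_refTriangle (by fun_prop))
      (integrableOn_refTriangle continuous_snd),
    integral_sub (integrableOn_refTriangle continuous_const)
      (integrableOn_refTriangle continuous_fst),
    setIntegral_const, smul_eq_mul, mul_one, measureReal_refTriangle,
    setIntegral_refTriangle_fst, setIntegral_refTriangle_snd]
  norm_num

theorem setIntegral_refTriangle_barycentric {F : Type*} [NormedAddCommGroup F] [NormedSpace ℝ F]
    [CompleteSpace F] (a b c : F) :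
    ∫ p in refTriangle, ((1 - p.1 - p.2) • a + p.1 • b + p.2 • c) =
      (1 / 6 : ℝ) • (a + b + c) := by
  rw [integral_add (integrableOn_refTriangle (by fun_prop))
      (integrableOn_refTriangle (by fun_prop)),
    integral_add (integrableOn_refTriangle (by fun_prop)) (integrableOn_refTriangle (by fun_prop)),
    integral_smul_const, integral_smul_const, integral_smul_const, setIntegral_refTriangle_one_sub,
    setIntegral_refTriangle_fst, setIntegral_refTriangle_snd, smul_add, smul_add]

theorem setIntegral_refTriangle_map_sub_centroid {E F : Type*} [NormedAddCommGroup E]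
    [NormedSpace ℝ E] [NormedAddCommGroup F] [NormedSpace ℝ F] [CompleteSpace F]
    (L : E →L[ℝ] F) (A B C : E) :
    ∫ p in refTriangle, L ((1 - p.1 - p.2) • A + p.1 • B + p.2 • C - (1 / 3 : ℝ) • (A + B + C))
      = 0 := by
  simp only [map_sub, map_add, map_smul]
  rw [integral_sub (integrableOn_refTriangle (by fun_prop))
      (integrableOn_refTriangle continuous_const),
    setIntegral_refTriangle_barycentric, setIntegral_const, measureReal_refTriangle]
  module

section Taylor

variable {F : Type*} [NormedAddCommGroup F] [NormedSpace ℝ F]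

theorem norm_sub_sub_smul_deriv_le {φ φ' φ'' : ℝ → F} {a b M : ℝ} (hab : a ≤ b)
    (hφ : ∀ u ∈ Icc a b, HasDerivWithinAt φ (φ' u) (Icc a b) u)
    (hφ' : ∀ u ∈ Icc a b, HasDerivWithinAt φ' (φ'' u) (Icc a b) u)
    (hM : ∀ u ∈ Icc a b, ‖φ'' u‖ ≤ M) :
    ‖φ b - φ a - (b - a) • φ' a‖ ≤ M * (b - a) ^ 2 / 2 := by
  have hφ'_sub : ∀ u ∈ Icc a b, ‖φ' u - φ' a‖ ≤ M * (u - a) :=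
    norm_image_sub_le_of_norm_deriv_le_segment' hφ' fun u hu => hM u (Ico_subset_Icc_self hu)
  have hrem : ∀ u ∈ Ico a b, HasDerivWithinAt (fun u => φ u - φ a - (u - a) • φ' a)
      (φ' u - φ' a) (Ici u) u := by
    intro u hu
    have := ((hφ u (Ico_subset_Icc_self hu)).mono_of_mem_nhdsWithin
      (Icc_mem_nhdsGE_of_mem hu)).sub_const (φ a)
    have hlin : HasDerivAt (fun u : ℝ => (u - a) • φ' a) (φ' a) u := by
      simpa using ((hasDerivAt_id u).sub_const a).smul_const (φ' a)
    exact this.sub hlin.hasDerivWithinAt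
  have hB : ∀ u, HasDerivAt (fun u => M * (u - a) ^ 2 / 2) (M * (u - a)) u := fun u => by
    refine ((((hasDerivAt_id u).sub_const a).pow 2).const_mul M |>.div_const 2).congr_deriv ?_
    simp only [id, Nat.cast_ofNat]; ring
  refine image_norm_le_of_norm_deriv_right_le_deriv_boundary
    (fun u hu => ((hφ u hu).continuousWithinAt.sub continuousWithinAt_const).sub
      ((continuousWithinAt_id.sub continuousWithinAt_const).smul continuousWithinAt_const))
    hrem (by simp) hB (fun u hu => hφ'_sub u (Ico_subset_Icc_self hu)) ⟨hab, le_rfl⟩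

theorem norm_sub_sub_fderiv_le_of_segment_subset {E : Type*} [NormedAddCommGroup E]
    [NormedSpace ℝ E] {f : E → F} {U : Set E} (hU : IsOpen U) (hf : ContDiffOn ℝ 2 f U)
    {x y : E} (hxy : segment ℝ x y ⊆ U) {M : ℝ}
    (hM : ∀ z ∈ segment ℝ x y, ‖iteratedFDeriv ℝ 2 f z ![y - x, y - x]‖ ≤ M) :
    ‖f y - f x - fderiv ℝ f x (y - x)‖ ≤ M / 2 := by
  have hseg : ∀ u ∈ Icc (0 : ℝ) 1, AffineMap.lineMap x y u ∈ segment ℝ x y := fun u hu => by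
    rw [segment_eq_image_lineMap]; exact mem_image_of_mem _ hu
  have hf' : ∀ z ∈ U, HasFDerivAt f (fderiv ℝ f z) z := fun z hz =>
    (hf.differentiableOn two_ne_zero z hz).differentiableAt (hU.mem_nhds hz) |>.hasFDerivAt
  have hf'' : ∀ z ∈ U, HasFDerivAt (fderiv ℝ f) (fderiv ℝ (fderiv ℝ f) z) z := fun z hz =>
    ((hf.fderiv_of_isOpen hU one_add_one_eq_two.le).differentiableOn one_ne_zero z hz
      |>.differentiableAt (hU.mem_nhds hz)).hasFDerivAt
  have key := norm_sub_sub_smul_deriv_le zero_le_one (φ := fun u => f (AffineMap.lineMap x y u))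
    (φ' := fun u => fderiv ℝ f (AffineMap.lineMap x y u) (y - x))
    (φ'' := fun u => iteratedFDeriv ℝ 2 f (AffineMap.lineMap x y u) ![y - x, y - x])
    (fun u hu => ((hf' _ (hxy (hseg u hu))).comp_hasDerivAt u
      AffineMap.hasDerivAt_lineMap).hasDerivWithinAt)
    (fun u hu => by
      have := ((hf'' _ (hxy (hseg u hu))).comp_hasDerivAt u
        AffineMap.hasDerivAt_lineMap).clm_apply (hasDerivAt_const u (y - x))
      simpa [iteratedFDeriv_two_apply] using this.hasDerivWithinAt)
    (fun u hu => hM _ (hseg u hu))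
  simpa using key

end Taylor

section Triangle

variable {E : Type*} [NormedAddCommGroup E] [NormedSpace ℝ E]

theorem barycentric_mem_convexHull (A B C : E) {p : ℝ × ℝ} (hp : p ∈ refTriangle) :
    (1 - p.1 - p.2) • A + p.1 • B + p.2 • C ∈ convexHull ℝ {A, B, C} := by
  obtain ⟨hs, ht, hst⟩ := hp
  have := (convex_convexHull ℝ ({A, B, C} : Set E)).sum_mem (t := Finset.univ)
    (w := ![1 - p.1 - p.2, p.1, p.2]) (z := ![A, B, C])
    (fun i _ => by fin_cases i <;> simp <;> linarith)
    (by simp [Fin.sum_univ_three]; ring)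
    (fun i _ => subset_convexHull ℝ _ (by fin_cases i <;> simp))
  simpa [Fin.sum_univ_three, add_assoc] using this

theorem norm_sub_centroid_le {p q r : E} {h : ℝ} (hq : ‖p - q‖ ≤ h) (hr : ‖p - r‖ ≤ h) :
    ‖p - (1 / 3 : ℝ) • (p + q + r)‖ ≤ 2 / 3 * h := by
  have : p - (1 / 3 : ℝ) • (p + q + r) = (1 / 3 : ℝ) • ((p - q) + (p - r)) := by module
  rw [this, norm_smul, Real.norm_of_nonneg (by norm_num)]
  linarith [norm_add_le (p - q) (p - r)]

theorem convexHull_triple_subset_closedBall_centroid {A B C : E} {h : ℝ}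
    (hh : Metric.diam ({A, B, C} : Set E) ≤ h) :
    convexHull ℝ {A, B, C} ⊆ Metric.closedBall ((1 / 3 : ℝ) • (A + B + C)) (2 / 3 * h) := by
  have hd : ∀ p ∈ ({A, B, C} : Set E), ∀ q ∈ ({A, B, C} : Set E), ‖p - q‖ ≤ h :=
    fun p hp q hq => (dist_eq_norm p q ▸
      Metric.dist_le_diam_of_mem (toFinite _).isBounded hp hq).trans hh
  rw [(convex_closedBall _ _).convexHull_subset_iff]
  simp only [insert_subset_iff, singleton_subset_iff, mem_closedBall_iff_norm]
  refine ⟨norm_sub_centroid_le (hd _ (by simp) _ (by simp)) (hd _ (by simp) _ (by simp)), ?_, ?_⟩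
  · rw [show A + B + C = B + A + C by abel]
    exact norm_sub_centroid_le (hd _ (by simp) _ (by simp)) (hd _ (by simp) _ (by simp))
  · rw [show A + B + C = C + A + B by abel]
    exact norm_sub_centroid_le (hd _ (by simp) _ (by simp)) (hd _ (by simp) _ (by simp))

theorem abs_setIntegral_refTriangle_sub_centroid_le {f : E → ℝ} {U : Set E} (hU : IsOpen U)
    (hf : ContDiffOn ℝ 2 f U) {A B C : E} (hTU : convexHull ℝ {A, B, C} ⊆ U) {K h : ℝ}
    (hK : 0 ≤ K)
    (hK2 : ∀ y ∈ convexHull ℝ {A, B, C}, ∀ v : E, |iteratedFDeriv ℝ 2 f y ![v, v]| ≤ K * ‖v‖ ^ 2)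
    (hh : Metric.diam (convexHull ℝ ({A, B, C} : Set E)) ≤ h) :
    |(∫ p in refTriangle, f ((1 - p.1 - p.2) • A + p.1 • B + p.2 • C))
      - f ((1 / 3 : ℝ) • (A + B + C)) / 2| ≤ K * h ^ 2 / 8 := by
  set x : ℝ × ℝ → E := fun p => (1 - p.1 - p.2) • A + p.1 • B + p.2 • C
  set c : E := (1 / 3 : ℝ) • (A + B + C)
  have hxT : ∀ p ∈ refTriangle, x p ∈ convexHull ℝ {A, B, C} :=
    fun p hp => barycentric_mem_convexHull A B C hp
  have hcT : c ∈ convexHull ℝ {A, B, C} := by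
    convert hxT (1 / 3, 1 / 3) ⟨by norm_num, by norm_num, by norm_num⟩ using 1
    simp only [x, c]; module
  have hball := convexHull_triple_subset_closedBall_centroid ((convexHull_diam _).symm.trans_le hh)
  have hrem : ∀ p ∈ refTriangle,
      ‖f (x p) - f c - fderiv ℝ f c (x p - c)‖ ≤ K * (2 / 3 * h) ^ 2 / 2 := by
    intro p hp
    have hseg := (convex_convexHull ℝ _).segment_subset hcT (hxT p hp)
    refine norm_sub_sub_fderiv_le_of_segment_subset hU hf (hseg.trans hTU) fun z hz => ?_
    calc ‖iteratedFDeriv ℝ 2 f z ![x p - c, x p - c]‖ ≤ K * ‖x p - c‖ ^ 2 := hK2 z (hseg hz) _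
      _ ≤ K * (2 / 3 * h) ^ 2 := by
        gcongr; exact mem_closedBall_iff_norm.1 (hball (hxT p hp))
  have hfx : IntegrableOn (fun p => f (x p)) refTriangle :=
    (hf.continuousOn.comp (by fun_prop) fun p hp => hTU (hxT p hp)).integrableOn_compact
      isCompact_refTriangle
  have hsplit : (∫ p in refTriangle, f (x p)) - f c / 2 =
      ∫ p in refTriangle, (f (x p) - f c - fderiv ℝ f c (x p - c)) := by
    have hlin : IntegrableOn (fun p => fderiv ℝ f c (x p - c)) refTriangle :=
      integrableOn_refTriangle (by fun_prop)
    have hfxc : IntegrableOn (fun p => f (x p) - f c) refTriangle :=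
      hfx.sub (integrableOn_refTriangle continuous_const)
    rw [integral_sub hfxc hlin, setIntegral_refTriangle_map_sub_centroid,
      integral_sub hfx (integrableOn_refTriangle continuous_const), setIntegral_const,
      measureReal_refTriangle, smul_eq_mul, sub_zero]
    ring
  calc _ = ‖∫ p in refTriangle, (f (x p) - f c - fderiv ℝ f c (x p - c))‖ := by
        rw [hsplit, Real.norm_eq_abs]
    _ ≤ K * (2 / 3 * h) ^ 2 / 2 * volume.real refTriangle :=
        norm_setIntegral_le_of_norm_le_const isCompact_refTriangle.measure_lt_top hrem
    _ ≤ K * h ^ 2 / 8 := by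
        rw [measureReal_refTriangle]; nlinarith [mul_nonneg hK (sq_nonneg h)]

end Triangle

theorem abs_sum_mul_sub_sum_mul_le {ι : Type*} {s : Finset ι} {w x y : ι → ℝ} {ε : ℝ}
    (hw : ∀ j ∈ s, 0 ≤ w j) (hxy : ∀ j ∈ s, |x j - y j| ≤ ε) :
    |∑ j ∈ s, w j * x j - ∑ j ∈ s, w j * y j| ≤ ε * ∑ j ∈ s, w j := by
  rw [← Finset.sum_sub_distrib, Finset.mul_sum]
  refine (Finset.abs_sum_le_sum_abs _ _).trans (Finset.sum_le_sum fun j hj => ?_)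
  rw [← mul_sub, abs_mul, abs_of_nonneg (hw j hj), mul_comm]
  exact mul_le_mul_of_nonneg_right (hxy j hj) (hw j hj)

/-- Lemma 6 of the paper, three-dimensional case: composite centroid quadrature over a
triangulated surface `Γ_p = ⋃ⱼ Tⱼ`, where the `j`-th triangle has vertices
`a j, b j, c j`, centroid `(a j + b j + c j)/3` and `|Δⱼ| = ‖(b j − a j) × (c j − a j)‖`.
If the diameter of every triangle is at most `h`, the quadrature error is bounded by
`(K h²/4) |Γ_p|`, with `|Γ_p| = Σⱼ |Δⱼ|/2` the total area. -/
theorem composite_centroid_rule_triangulated_surface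
    (m : ℕ) (a b c : ℕ → EuclideanSpace ℝ (Fin 3))
    (T : ℕ → Set (EuclideanSpace ℝ (Fin 3)))
    (hT : ∀ j, T j = convexHull ℝ {a j, b j, c j})
    (f : EuclideanSpace ℝ (Fin 3) → ℝ)
    (U : Set (EuclideanSpace ℝ (Fin 3))) (hU : IsOpen U)
    (hTU : (⋃ j ∈ Finset.range m, T j) ⊆ U)
    (hf : ContDiffOn ℝ 2 f U)
    (K : ℝ) (hK : 0 ≤ K)
    (hK2 : ∀ y ∈ ⋃ j ∈ Finset.range m, T j, ∀ v : EuclideanSpace ℝ (Fin 3),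
      |iteratedFDeriv ℝ 2 f y ![v, v]| ≤ K * ‖v‖ ^ 2)
    (h : ℝ) (hh : ∀ j ∈ Finset.range m, Metric.diam (T j) ≤ h) :
    |(∑ j ∈ Finset.range m, ‖cross3 (b j - a j) (c j - a j)‖ *
        (∫ p in refTriangle, f ((1 - p.1 - p.2) • a j + p.1 • b j + p.2 • c j))) -
      ∑ j ∈ Finset.range m, (‖cross3 (b j - a j) (c j - a j)‖ / 2) *
        f (((1:ℝ)/3) • (a j + b j + c j))|
      ≤ (K * h ^ 2 / 4) *
        (∑ j ∈ Finset.range m, ‖cross3 (b j - a j) (c j - a j)‖ / 2) := by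
  have htri : ∀ j ∈ Finset.range m,
      |(∫ p in refTriangle, f ((1 - p.1 - p.2) • a j + p.1 • b j + p.2 • c j))
        - f ((1 / 3 : ℝ) • (a j + b j + c j)) / 2| ≤ K * h ^ 2 / 8 := by
    intro j hj
    have hTj : convexHull ℝ {a j, b j, c j} ⊆ ⋃ i ∈ Finset.range m, T i :=
      hT j ▸ subset_biUnion_of_mem (u := T) hj
    exact abs_setIntegral_refTriangle_sub_centroid_le hU hf (hTj.trans hTU) hK
      (fun y hy => hK2 y (hTj hy)) (hT j ▸ hh j hj)
  simp only [mul_comm_div]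
  exact (abs_sum_mul_sub_sum_mul_le (fun _ _ => norm_nonneg _) htri).trans_eq
    (by rw [← Finset.sum_div]; ring)
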